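/- arXiv:1706.01155 — 2 statements merged into one kernel-verified Lean document; each statement's English description precedes it below -/
import Mathlib

section
/- Lipschitz continuity of the transform in its squared arguments: fix ε > 0, C₀ > 0 and C₁,…,C_m ≥ 0, and define g(x₀, x₁, …, x_m) = x₀²/(C₀ + Σ_{j=1}^m C_j x_j² + ε x₀²) for (x₀,…,x_m) ∈ ℝ^{m+1}. Then there exists a finite constant L, depending only on ε, C₀ and C₁,…,C_m (one may take L = max(1/C₀, max_{1≤j≤m} C_j/(4 C₀ ε))), such that |g(x) − g(x')| ≤ L·Σ_{k=0}^m |x_k² − (x_k')²| for all x, x' ∈ ℝ^{m+1}. Hence the specific transform g₁ used in Stage 1 satisfies assumption (A5). -/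
/-! Write the transform as `a / (C₀ + s + ε a)` with `a = x₀²` and `s = Σ C_j x_j²`, and pass
from `(a, s)` to `(b, t)` through `(b, s)`. Changing `a` alone costs at most `|a - b| / C₀`,
since the common part `C₀ + s` of the denominators is at least `C₀`; changing `s` alone costs at
most `|s - t| / (ε C₀)`, since `b / (C₀ + s + ε b) ≤ 1 / ε`. Finally
`|s - t| ≤ (Σ C_j) Σ |x_j² - y_j²|`. -/

open Finset

lemma abs_div_add_mul_sub_div_add_mul_le {K ε a b : ℝ} (hK : 0 < K) (hε : 0 ≤ ε)
    (ha : 0 ≤ a) (hb : 0 ≤ b) :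
    |a / (K + ε * a) - b / (K + ε * b)| ≤ |a - b| / K := by
  have hKa : K ≤ K + ε * a := le_add_of_nonneg_right (mul_nonneg hε ha)
  have hKb : K ≤ K + ε * b := le_add_of_nonneg_right (mul_nonneg hε hb)
  have hprod : 0 < (K + ε * a) * (K + ε * b) := by positivity
  have hdiff : a / (K + ε * a) - b / (K + ε * b) = K * (a - b) / ((K + ε * a) * (K + ε * b)) := by
    field_simp
    ring
  rw [hdiff, abs_div, abs_mul, abs_of_pos hK, abs_of_pos hprod, div_le_div_iff₀ hprod hK]
  calc K * |a - b| * K = |a - b| * (K * K) := by ring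
    _ ≤ |a - b| * ((K + ε * a) * (K + ε * b)) := by gcongr

lemma abs_div_sub_div_le_of_mul_le {b p q ε C₀ : ℝ} (hb : 0 ≤ b) (hε : 0 < ε) (hC₀ : 0 < C₀)
    (hp : 0 < p) (hbp : ε * b ≤ p) (hq : C₀ ≤ q) :
    |b / p - b / q| ≤ |p - q| / (ε * C₀) := by
  have hq0 : 0 < q := hC₀.trans_le hq
  have hdiff : b / p - b / q = b / p * (q - p) / q := by
    field_simp
  have hbp' : b / p ≤ 1 / ε := by
    rw [div_le_div_iff₀ hp hε]; linarith
  rw [hdiff, abs_div, abs_mul, abs_of_nonneg (div_nonneg hb hp.le), abs_of_pos hq0, abs_sub_comm]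
  calc b / p * |p - q| / q ≤ 1 / ε * |p - q| / C₀ := by gcongr
    _ = |p - q| / (ε * C₀) := by field_simp

lemma abs_sum_mul_sub_sum_mul_le {ι : Type*} (s : Finset ι) {w : ι → ℝ}
    (hw : ∀ i ∈ s, 0 ≤ w i) (u v : ι → ℝ) :
    |∑ i ∈ s, w i * u i - ∑ i ∈ s, w i * v i| ≤ (∑ i ∈ s, w i) * ∑ i ∈ s, |u i - v i| := by
  rw [← sum_sub_distrib, mul_sum]
  refine (abs_sum_le_sum_abs _ _).trans (sum_le_sum fun i hi => ?_)
  rw [← mul_sub, abs_mul, abs_of_nonneg (hw i hi)]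
  gcongr
  exact single_le_sum hw hi

lemma abs_div_add_add_mul_sub_div_add_add_mul_le {C₀ ε a b s t : ℝ} (hC₀ : 0 < C₀) (hε : 0 < ε)
    (ha : 0 ≤ a) (hb : 0 ≤ b) (hs : 0 ≤ s) (ht : 0 ≤ t) :
    |a / (C₀ + s + ε * a) - b / (C₀ + t + ε * b)| ≤ |a - b| / C₀ + |s - t| / (ε * C₀) := by
  have hsame_s : |a / (C₀ + s + ε * a) - b / (C₀ + s + ε * b)| ≤ |a - b| / C₀ :=
    (abs_div_add_mul_sub_div_add_mul_le (by positivity) hε.le ha hb).trans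
      (div_le_div_of_nonneg_left (abs_nonneg _) hC₀ (le_add_of_nonneg_right hs))
  have hsame_b : |b / (C₀ + s + ε * b) - b / (C₀ + t + ε * b)| ≤ |s - t| / (ε * C₀) := by
    have h := abs_div_sub_div_le_of_mul_le hb hε hC₀ (p := C₀ + s + ε * b) (q := C₀ + t + ε * b)
      (by positivity) (by linarith) (by nlinarith)
    rwa [show C₀ + s + ε * b - (C₀ + t + ε * b) = s - t by ring] at h
  exact (abs_sub_le _ _ _).trans (add_le_add hsame_s hsame_b)

/-- Lipschitz continuity of the Stage-1 transform in its squared arguments: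
fix `ε > 0`, `C₀ > 0` and `C₁,…,C_m ≥ 0`, and define
`g (x₀, x₁, …, x_m) = x₀² / (C₀ + Σ_{j=1}^m C_j x_j² + ε x₀²)`.
Then there exists a finite constant `L ≥ 0`, depending only on `ε`, `C₀` and the `C_j`,
such that `|g x − g x'| ≤ L · Σ_{k=0}^m |x_k² − (x_k')²|` for all `x, x' ∈ ℝ^(m+1)`.
Hence the transform `g₁` used in Stage 1 satisfies assumption (A5). -/
theorem stmt7 (m : ℕ) (ε C₀ : ℝ) (hε : 0 < ε) (hC₀ : 0 < C₀)
    (C : Fin m → ℝ) (hC : ∀ j, 0 ≤ C j) :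
    ∃ L : ℝ, 0 ≤ L ∧
      ∀ x y : Fin (m + 1) → ℝ,
        |(x 0) ^ 2 / (C₀ + (∑ j : Fin m, C j * (x j.succ) ^ 2) + ε * (x 0) ^ 2)
            - (y 0) ^ 2 / (C₀ + (∑ j : Fin m, C j * (y j.succ) ^ 2) + ε * (y 0) ^ 2)|
          ≤ L * ∑ k : Fin (m + 1), |(x k) ^ 2 - (y k) ^ 2| := by
  have hC_sum : 0 ≤ ∑ j, C j := sum_nonneg fun j _ => hC j
  refine ⟨1 / C₀ + (∑ j, C j) / (ε * C₀), by positivity, fun x y => ?_⟩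
  have hweights : ∀ z : Fin (m + 1) → ℝ, 0 ≤ ∑ j, C j * z j.succ ^ 2 := fun z =>
    sum_nonneg fun j _ => mul_nonneg (hC j) (sq_nonneg _)
  set d₀ := |x 0 ^ 2 - y 0 ^ 2|
  set d := ∑ j : Fin m, |x j.succ ^ 2 - y j.succ ^ 2|
  have hd : 0 ≤ d := sum_nonneg fun j _ => abs_nonneg _
  rw [Fin.sum_univ_succ]
  calc _ ≤ d₀ / C₀ + |∑ j, C j * x j.succ ^ 2 - ∑ j, C j * y j.succ ^ 2| / (ε * C₀) :=
        abs_div_add_add_mul_sub_div_add_add_mul_le hC₀ hε (sq_nonneg _) (sq_nonneg _)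
          (hweights x) (hweights y)
    _ ≤ d₀ / C₀ + (∑ j, C j) * d / (ε * C₀) := by
        gcongr
        exact abs_sum_mul_sub_sum_mul_le _ (fun j _ => hC j) _ _
    _ = (1 / C₀ + (∑ j, C j) / (ε * C₀)) * (d₀ + d)
          - (d / C₀ + (∑ j, C j) / (ε * C₀) * d₀) := by ring
    _ ≤ (1 / C₀ + (∑ j, C j) / (ε * C₀)) * (d₀ + d) := sub_le_self _ (by positivity)
end

section
/- CUSUM of a one-change step signal is maximized at the change-point: let s ≤ η < e be integers with e − s ≥ 1, and let x_t = μ₁ for s ≤ t ≤ η and x_t = μ₂ for η < t ≤ e, with μ₁ ≠ μ₂. Define the CUSUM X_{s,c,e} = sqrt((c−s+1)(e−c)/(e−s+1))·((c−s+1)^{−1}Σ_{t=s}^c x_t − (e−c)^{−1}Σ_{t=c+1}^e x_t) for c = s,…,e−1. Then X_{s,η,e} = sqrt((η−s+1)(e−η)/(e−s+1))·(μ₁ − μ₂), and |X_{s,c,e}| ≤ |X_{s,η,e}| for every c ∈ {s,…,e−1}, with equality only at c = η. -/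
open Finset

/-- The CUSUM statistic of the real sequence `x` over the segment `[s, e]` at the
candidate change location `c ∈ [s, e)`:
`X_{s,c,e} = sqrt((c−s+1)(e−c)/(e−s+1)) · ((c−s+1)⁻¹ Σ_{t=s}^c x_t − (e−c)⁻¹ Σ_{t=c+1}^e x_t)`. -/
noncomputable def cusum (x : ℕ → ℝ) (s c e : ℕ) : ℝ :=
  Real.sqrt (((c : ℝ) - s + 1) * ((e : ℝ) - c) / ((e : ℝ) - s + 1)) *
    ((∑ t ∈ Finset.Icc s c, x t) / ((c : ℝ) - s + 1)
      - (∑ t ∈ Finset.Icc (c + 1) e, x t) / ((e : ℝ) - c))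

/-! On one side of the change-point the two segment means differ by a fraction of
`μ₁ - μ₂`, so `X_{s,c,e}² = (μ₁ - μ₂)² / (e - s + 1) · g(c)` with
`g(c) = (c - s + 1)(e - η)² / (e - c)` for `c ≤ η` and `g(c) = (e - c)(η - s + 1)² / (c - s + 1)`
for `c ≥ η`. The first is strictly increasing and the second strictly decreasing in `c`,
and both equal `(η - s + 1)(e - η)` at `c = η`. -/

lemma sum_Icc_split {M : Type*} [AddCommMonoid M] (f : ℕ → M) {a b c : ℕ} (hab : a ≤ b + 1) (hbc : b ≤ c) :
    ∑ t ∈ Icc a c, f t = ∑ t ∈ Icc a b, f t + ∑ t ∈ Icc (b + 1) c, f t := by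
  rw [← sum_union (by simp only [disjoint_left, mem_Icc]; omega)]
  congr 1
  ext t
  simp only [mem_union, mem_Icc]
  omega

lemma sum_Icc_eq_of_forall_eq {x : ℕ → ℝ} {m n : ℕ} {μ : ℝ} (hmn : m ≤ n + 1)
    (h : ∀ t, m ≤ t → t ≤ n → x t = μ) :
    ∑ t ∈ Icc m n, x t = ((n : ℝ) + 1 - m) * μ := by
  rw [sum_congr rfl fun t ht => h t (mem_Icc.mp ht).1 (mem_Icc.mp ht).2, sum_const,
    Nat.card_Icc, nsmul_eq_mul, Nat.cast_sub hmn]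
  push_cast
  ring

def IsStepSignal (x : ℕ → ℝ) (s η e : ℕ) (μ₁ μ₂ : ℝ) : Prop :=
  (∀ t, s ≤ t → t ≤ η → x t = μ₁) ∧ ∀ t, η < t → t ≤ e → x t = μ₂

section StepSignal

variable {x : ℕ → ℝ} {s η e c : ℕ} {μ₁ μ₂ : ℝ}

lemma IsStepSignal.cusum_of_le (hx : IsStepSignal x s η e μ₁ μ₂)
    (hsc : s ≤ c) (hcη : c ≤ η) (hηe : η < e) :
    cusum x s c e = Real.sqrt (((c : ℝ) - s + 1) * ((e : ℝ) - c) / ((e : ℝ) - s + 1)) *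
      (((e : ℝ) - η) * (μ₁ - μ₂) / ((e : ℝ) - c)) := by
  have hleft : ∑ t ∈ Icc s c, x t = ((c : ℝ) + 1 - s) * μ₁ :=
    sum_Icc_eq_of_forall_eq (by omega) fun t h1 h2 => hx.1 t h1 (h2.trans hcη)
  have hright : ∑ t ∈ Icc (c + 1) e, x t = ((η : ℝ) - c) * μ₁ + ((e : ℝ) - η) * μ₂ := by
    rw [sum_Icc_split x (by omega) hηe.le,
      sum_Icc_eq_of_forall_eq (by omega) fun t h1 h2 => hx.1 t (by omega) h2,
      sum_Icc_eq_of_forall_eq (by omega) fun t h1 h2 => hx.2 t (by omega) h2]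
    push_cast
    ring
  have hA : (c : ℝ) - s + 1 ≠ 0 := by
    have : (s : ℝ) ≤ c := by exact_mod_cast hsc
    linarith
  have hB : (e : ℝ) - c ≠ 0 := sub_ne_zero.mpr (by exact_mod_cast (hcη.trans_lt hηe).ne')
  rw [cusum, hleft, hright]
  congr 1
  field_simp
  ring

lemma IsStepSignal.cusum_of_ge (hx : IsStepSignal x s η e μ₁ μ₂)
    (hsη : s ≤ η) (hηc : η ≤ c) (hce : c < e) :
    cusum x s c e = Real.sqrt (((c : ℝ) - s + 1) * ((e : ℝ) - c) / ((e : ℝ) - s + 1)) *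
      (((η : ℝ) - s + 1) * (μ₁ - μ₂) / ((c : ℝ) - s + 1)) := by
  have hleft : ∑ t ∈ Icc s c, x t = ((η : ℝ) + 1 - s) * μ₁ + ((c : ℝ) - η) * μ₂ := by
    rw [sum_Icc_split x (by omega) hηc, sum_Icc_eq_of_forall_eq (by omega) hx.1,
      sum_Icc_eq_of_forall_eq (by omega) fun t h1 h2 => hx.2 t (by omega) (by omega)]
    push_cast
    ring
  have hright : ∑ t ∈ Icc (c + 1) e, x t = ((e : ℝ) - c) * μ₂ := by
    rw [sum_Icc_eq_of_forall_eq (by omega) fun t h1 h2 => hx.2 t (by omega) h2]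
    push_cast
    ring
  have hA : (c : ℝ) - s + 1 ≠ 0 := by
    have : (s : ℝ) ≤ c := by exact_mod_cast hsη.trans hηc
    linarith
  have hB : (e : ℝ) - c ≠ 0 := sub_ne_zero.mpr (by exact_mod_cast hce.ne')
  rw [cusum, hleft, hright]
  congr 1
  field_simp
  ring

lemma IsStepSignal.cusum_changepoint (hx : IsStepSignal x s η e μ₁ μ₂)
    (hsη : s ≤ η) (hηe : η < e) :
    cusum x s η e =
      Real.sqrt (((η : ℝ) - s + 1) * ((e : ℝ) - η) / ((e : ℝ) - s + 1)) * (μ₁ - μ₂) := by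
  have hB : (e : ℝ) - η ≠ 0 := sub_ne_zero.mpr (by exact_mod_cast hηe.ne')
  rw [hx.cusum_of_le hsη le_rfl hηe, mul_div_cancel_left₀ _ hB]

lemma IsStepSignal.cusum_sq_of_le (hx : IsStepSignal x s η e μ₁ μ₂)
    (hsc : s ≤ c) (hcη : c ≤ η) (hηe : η < e) :
    cusum x s c e ^ 2 = (μ₁ - μ₂) ^ 2 / ((e : ℝ) - s + 1) *
      (((c : ℝ) - s + 1) * ((e : ℝ) - η) ^ 2 / ((e : ℝ) - c)) := by
  have hs : (s : ℝ) ≤ c := by exact_mod_cast hsc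
  have he : (c : ℝ) < e := by exact_mod_cast hcη.trans_lt hηe
  rw [hx.cusum_of_le hsc hcη hηe, mul_pow,
    Real.sq_sqrt (div_nonneg (by nlinarith) (by linarith))]
  field_simp

lemma IsStepSignal.cusum_sq_of_ge (hx : IsStepSignal x s η e μ₁ μ₂)
    (hsη : s ≤ η) (hηc : η ≤ c) (hce : c < e) :
    cusum x s c e ^ 2 = (μ₁ - μ₂) ^ 2 / ((e : ℝ) - s + 1) *
      (((e : ℝ) - c) * ((η : ℝ) - s + 1) ^ 2 / ((c : ℝ) - s + 1)) := by
  have hs : (s : ℝ) ≤ c := by exact_mod_cast hsη.trans hηc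
  have he : (c : ℝ) < e := by exact_mod_cast hce
  rw [hx.cusum_of_ge hsη hηc hce, mul_pow,
    Real.sq_sqrt (div_nonneg (by nlinarith) (by linarith))]
  field_simp

lemma IsStepSignal.abs_cusum_lt (hx : IsStepSignal x s η e μ₁ μ₂) (hμ : μ₁ ≠ μ₂)
    (hsη : s ≤ η) (hηe : η < e) (hsc : s ≤ c) (hce : c < e) (hcη : c ≠ η) :
    |cusum x s c e| < |cusum x s η e| := by
  have hs : (s : ℝ) ≤ c := by exact_mod_cast hsc
  have hη : (s : ℝ) ≤ η := by exact_mod_cast hsη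
  have he : (c : ℝ) < e := by exact_mod_cast hce
  have he' : (η : ℝ) < e := by exact_mod_cast hηe
  have hK : 0 < (μ₁ - μ₂) ^ 2 / ((e : ℝ) - s + 1) := by
    have : μ₁ - μ₂ ≠ 0 := sub_ne_zero.mpr hμ
    have : 0 < (e : ℝ) - s + 1 := by linarith
    positivity
  rw [← sq_lt_sq]
  rcases hcη.lt_or_gt with hlt | hgt
  · have hcη : (c : ℝ) < η := by exact_mod_cast hlt
    rw [hx.cusum_sq_of_le hsc hlt.le hηe, hx.cusum_sq_of_le hsη le_rfl hηe]
    gcongr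
  · have hηc : (η : ℝ) < c := by exact_mod_cast hgt
    rw [hx.cusum_sq_of_ge hsη hgt.le hce, hx.cusum_sq_of_ge hsη le_rfl hηe]
    gcongr

end StepSignal

/-- The CUSUM of a one-change step signal is maximized at the
change-point: let `s ≤ η < e` and `x_t = μ₁` for `s ≤ t ≤ η`, `x_t = μ₂` for `η < t ≤ e`
with `μ₁ ≠ μ₂`. Then `X_{s,η,e} = sqrt((η−s+1)(e−η)/(e−s+1))·(μ₁ − μ₂)` and
`|X_{s,c,e}| ≤ |X_{s,η,e}|` for every `c ∈ [s, e)`, with equality only at `c = η`. -/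
theorem stmt13 (s η e : ℕ) (hsη : s ≤ η) (hηe : η < e)
    (μ₁ μ₂ : ℝ) (hμ : μ₁ ≠ μ₂) (x : ℕ → ℝ)
    (hx1 : ∀ t, s ≤ t → t ≤ η → x t = μ₁)
    (hx2 : ∀ t, η < t → t ≤ e → x t = μ₂) :
    cusum x s η e
        = Real.sqrt (((η : ℝ) - s + 1) * ((e : ℝ) - η) / ((e : ℝ) - s + 1)) * (μ₁ - μ₂) ∧
      (∀ c, s ≤ c → c < e → |cusum x s c e| ≤ |cusum x s η e|) ∧
      (∀ c, s ≤ c → c < e → |cusum x s c e| = |cusum x s η e| → c = η) := by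
  have hx : IsStepSignal x s η e μ₁ μ₂ := ⟨hx1, hx2⟩
  refine ⟨hx.cusum_changepoint hsη hηe, fun c hsc hce => ?_, fun c hsc hce heq => ?_⟩
  · rcases eq_or_ne c η with rfl | hcη
    · exact le_rfl
    · exact (hx.abs_cusum_lt hμ hsη hηe hsc hce hcη).le
  · by_contra hcη
    exact (hx.abs_cusum_lt hμ hsη hηe hsc hce hcη).ne heq
end
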